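/- arXiv:2603.06491 — 2 statements merged into one kernel-verified Lean document; each statement's English description precedes it below -/
import Mathlib

section
/- Let f : 𝔻 → 𝔻 be an injective holomorphic map that extends to a neighborhood of the closed disk, i.e., there exist an open set U ⊆ ℂ containing the closure of 𝔻 and an injective holomorphic map f̃ : U → ℂ with f̃|_𝔻 = f. Then F_f is square-integrable on 𝔻 × 𝔻. -/
open MeasureTheory Complex Set

noncomputable section

/-- The open unit disk in ℂ. -/
def unitDisk : Set ℂ := {z : ℂ | ‖z‖ < 1}

/-- The normalized area measure `π⁻¹ · (2-dimensional Lebesgue measure)` on ℂ. -/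
def μB : Measure ℂ := (ENNReal.ofReal (Real.pi)⁻¹) • (volume : Measure ℂ)

/-- The cocycle `F_φ(z,w) = φ'(z)φ'(w)/(φ(z) − φ(w))² − 1/(z − w)²`. -/
def Fcocycle (φ : ℂ → ℂ) (z w : ℂ) : ℂ :=
  deriv φ z * deriv φ w / (φ z - φ w) ^ 2 - 1 / (z - w) ^ 2

/-!
For fixed `w`, write `f̃ z - f̃ w = (z - w) Q z` with `Q = dslope f̃ w`. Then `F(·, w)` equals
`S / Q ^ 2` off `w` for a holomorphic `S`, and `Q` has no zeros because `f̃` is injective (an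
injective holomorphic map has nonvanishing derivative). So `F(·, w)` extends holomorphically across
`w`, and the maximum modulus principle on a disk `|z| ≤ R` inside `U`, `R > 1`, bounds `F` on
`𝔻 × 𝔻` by its maximum over the compact set `{|z| = R} × {|w| ≤ 1}`, which misses the diagonal.
A bounded function is square-integrable on `𝔻 × 𝔻`.
-/

open Filter Metric
open scoped Topology ENNReal

lemma AnalyticAt.exists_pow_eq {h : ℂ → ℂ} {z₀ : ℂ} (hh : AnalyticAt ℂ h z₀) (h₀ : h z₀ ≠ 0)
    {n : ℕ} (hn : n ≠ 0) :
    ∃ r : ℂ → ℂ, AnalyticAt ℂ r z₀ ∧ r z₀ ≠ 0 ∧ ∀ᶠ z in 𝓝 z₀, r z ^ n = h z := by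
  have hnC : (n : ℂ) ≠ 0 := Nat.cast_ne_zero.mpr hn
  have pow_exp_log_div {u : ℂ} (hu : u ≠ 0) : cexp (Complex.log u / n) ^ n = u := by
    rw [← exp_nat_mul, mul_div_cancel₀ _ hnC, exp_log hu]
  -- The branch of `log` is taken at `h z / h z₀`, which stays near `1`, inside the slit plane.
  refine ⟨fun z ↦ cexp (Complex.log (h z₀) / n) * cexp (Complex.log (h z / h z₀) / n), ?_,
    by simp [exp_ne_zero], ?_⟩
  · exact analyticAt_const.mul (((hh.div analyticAt_const h₀).clog
      (by simp [div_self h₀])).div analyticAt_const hnC).cexp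
  · filter_upwards [hh.continuousAt.eventually_ne h₀] with z hz
    rw [mul_pow, pow_exp_log_div h₀, pow_exp_log_div (div_ne_zero hz h₀), mul_div_cancel₀ _ h₀]

lemma Complex.not_injOn_pow {n : ℕ} (hn : 2 ≤ n) {s : Set ℂ} (hs : s ∈ 𝓝 0) :
    ¬ InjOn (· ^ n) s := by
  intro hinj
  obtain ⟨ε, hε, hball⟩ := Metric.mem_nhds_iff.mp hs
  have hω := Complex.isPrimitiveRoot_exp n (by omega)
  set ω := exp (2 * Real.pi * I / n)
  set p : ℂ := ((ε / 2 : ℝ) : ℂ)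
  have hp : ‖p‖ = ε / 2 := by simp [p, abs_of_pos hε]
  have hp_mem : p ∈ ball (0 : ℂ) ε := by rw [mem_ball_zero_iff, hp]; linarith
  have hωp_mem : ω * p ∈ ball (0 : ℂ) ε := by
    rwa [mem_ball_zero_iff, norm_mul, hω.norm'_eq_one (by omega), one_mul, ← mem_ball_zero_iff]
  have hpow : (ω * p) ^ n = p ^ n := by rw [mul_pow, hω.pow_eq_one, one_mul]
  have heq := hinj (hball hωp_mem) (hball hp_mem) hpow
  have hp0 : p ≠ 0 := by rw [← norm_ne_zero_iff, hp]; positivity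
  exact hω.ne_one (by omega) (mul_right_cancel₀ hp0 (heq.trans (one_mul p).symm))

lemma AnalyticAt.deriv_ne_zero_of_injOn {g : ℂ → ℂ} {z₀ : ℂ} {s : Set ℂ}
    (hg : AnalyticAt ℂ g z₀) (hs : s ∈ 𝓝 z₀) (hinj : InjOn g s) : deriv g z₀ ≠ 0 := by
  intro hderiv
  have hnonconst : ¬ ∀ᶠ z in 𝓝 z₀, g z - g z₀ = 0 := by
    intro hconst
    have : ∀ᶠ z in 𝓝[≠] z₀, z = z₀ := nhdsWithin_le_nhds <| by
      filter_upwards [hconst, hs] with z hz hzs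
      exact hinj hzs (mem_of_mem_nhds hs) (sub_eq_zero.mp hz)
    obtain ⟨z, hz, hne⟩ := (this.and self_mem_nhdsWithin).exists
    exact hne hz
  obtain ⟨n, h, hh, hh₀, hgh⟩ :=
    ((hg.sub analyticAt_const).exists_eventuallyEq_pow_smul_nonzero_iff).mpr hnonconst
  have hgh' : g =ᶠ[𝓝 z₀] fun z ↦ g z₀ + (z - z₀) ^ n * h z := by
    filter_upwards [hgh] with z hz
    simp only [Pi.sub_apply, smul_eq_mul] at hz
    linear_combination hz
  have hn₀ : n ≠ 0 := by
    rintro rfl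
    exact hh₀ (by simpa using hgh.self_of_nhds : 0 = h z₀).symm
  have hn : 2 ≤ n := by
    suffices n ≠ 1 by omega
    rintro rfl
    have hd : HasDerivAt (fun z ↦ g z₀ + (z - z₀) ^ 1 * h z) (h z₀) z₀ := by
      simpa using ((hasDerivAt_id z₀).sub_const z₀).mul hh.differentiableAt.hasDerivAt
        |>.const_add (g z₀)
    exact hh₀ (by rw [← hd.deriv, ← hgh'.deriv_eq, hderiv])
  obtain ⟨r, hr, hr₀, hrh⟩ := hh.exists_pow_eq hh₀ hn₀
  -- `g = g z₀ + φ ^ n` with `φ` a local coordinate at `z₀`, so `g` is `n`-to-one near `z₀`.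
  set φ : ℂ → ℂ := fun z ↦ (z - z₀) * r z
  have hφ : HasStrictDerivAt φ (r z₀) z₀ := by
    have hd : HasDerivAt φ (r z₀) z₀ := by
      simpa using ((hasDerivAt_id z₀).sub_const z₀).fun_mul hr.differentiableAt.hasDerivAt
    exact hd.deriv ▸ ((analyticAt_id.sub analyticAt_const).fun_mul hr).hasStrictDerivAt
  have hmap : map φ (𝓝 z₀) = 𝓝 0 := by simpa [φ] using hφ.map_nhds_eq hr₀
  obtain ⟨t, hts, ht, hz₀t⟩ := _root_.eventually_nhds_iff.mp ((hgh'.and hrh).and hs)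
  refine Complex.not_injOn_pow hn (s := φ '' t) ?_ ?_
  · exact hmap ▸ image_mem_map (ht.mem_nhds hz₀t)
  rintro _ ⟨a, ha, rfl⟩ _ ⟨b, hb, rfl⟩ hab
  have hg_eq : ∀ z ∈ t, g z = g z₀ + φ z ^ n := fun z hz ↦ by
    rw [(hts z hz).1.1, mul_pow, (hts z hz).1.2]
  have hgab : g a = g b := by rw [hg_eq a ha, hg_eq b hb]; exact congrArg _ hab
  rw [hinj (hts a ha).2 (hts b hb).2 hgab]

section InjectiveHolomorphic

variable {g : ℂ → ℂ} {U : Set ℂ}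

lemma deriv_ne_zero_of_injOn (hU : IsOpen U) (hg : DifferentiableOn ℂ g U)
    (hinj : InjOn g U) {w : ℂ} (hw : w ∈ U) : deriv g w ≠ 0 :=
  (hg.analyticAt (hU.mem_nhds hw)).deriv_ne_zero_of_injOn (hU.mem_nhds hw) hinj

lemma dslope_ne_zero_of_injOn (hU : IsOpen U) (hg : DifferentiableOn ℂ g U)
    (hinj : InjOn g U) {w z : ℂ} (hw : w ∈ U) (hz : z ∈ U) : dslope g w z ≠ 0 := by
  rcases eq_or_ne z w with rfl | hzw
  · rw [dslope_same]; exact deriv_ne_zero_of_injOn hU hg hinj hw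
  · rw [dslope_of_ne _ hzw, slope_def_field]
    exact div_ne_zero (sub_ne_zero.mpr fun h ↦ hzw (hinj hz hw h)) (sub_ne_zero.mpr hzw)

/-- With `Q = dslope g w`, one has `g' z * g' w - Q z ^ 2 = (z - w) * T z` where
`T = Q' * g' w - Q * dslope Q w` vanishes at `w`, so `F_g(·, w) = dslope T w / Q ^ 2`. -/
lemma exists_differentiableOn_eqOn_Fcocycle (hU : IsOpen U)
    (hg : DifferentiableOn ℂ g U) (hinj : InjOn g U) {w : ℂ} (hw : w ∈ U) :
    ∃ G : ℂ → ℂ, DifferentiableOn ℂ G U ∧ EqOn G (fun z ↦ Fcocycle g z w) (U \ {w}) := by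
  have hUw : U ∈ 𝓝 w := hU.mem_nhds hw
  set Q := dslope g w
  have hQ : DifferentiableOn ℂ Q U := (differentiableOn_dslope hUw).mpr hg
  set T := fun z ↦ deriv Q z * deriv g w - Q z * dslope Q w z
  have hT : DifferentiableOn ℂ T U :=
    ((hQ.deriv hU).mul_const _).sub (hQ.mul ((differentiableOn_dslope hUw).mpr hQ))
  refine ⟨fun z ↦ dslope T w z / Q z ^ 2, ((differentiableOn_dslope hUw).mpr hT).div (hQ.pow 2)
    fun z hz ↦ pow_ne_zero 2 (dslope_ne_zero_of_injOn hU hg hinj hw hz), ?_⟩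
  rintro z ⟨hz, hzw : z ≠ w⟩
  have hgQ : g = fun y ↦ g w + (y - w) * Q y := funext fun y ↦ by
    rw [← smul_eq_mul, sub_smul_dslope]; ring
  have hg' : deriv g z = Q z + (z - w) * deriv Q z := by
    have hd := ((hasDerivAt_id z).sub_const w).fun_mul
      (hQ.differentiableAt (hU.mem_nhds hz)).hasDerivAt |>.const_add (g w)
    rw [hgQ]; exact hd.deriv.trans (by simp)
  have hQw : Q w = deriv g w := dslope_same g w
  have hQz : Q z - Q w = (z - w) * dslope Q w z := (sub_smul_dslope Q w z).symm
  have hTz : deriv Q z * deriv g w - Q z * dslope Q w z = (z - w) * dslope T w z := by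
    have hTw : T w = 0 := by simp only [T, dslope_same, hQw]; ring
    rw [← smul_eq_mul (z - w), sub_smul_dslope, hTw, sub_zero]
  have hΔ : g z - g w = (z - w) * Q z := (sub_smul_dslope g w z).symm
  have hzw' : z - w ≠ 0 := sub_ne_zero.mpr hzw
  have hQz₀ : Q z ≠ 0 := dslope_ne_zero_of_injOn hU hg hinj hw hz
  have key : (Q z + (z - w) * deriv Q z) * deriv g w - Q z ^ 2 = (z - w) ^ 2 * dslope T w z := by
    linear_combination (z - w) * hTz - Q z * hQz - Q z * hQw
  simp only [Fcocycle, hΔ, hg']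
  field_simp
  linear_combination -key

lemma continuousOn_Fcocycle (hU : IsOpen U) (hg : DifferentiableOn ℂ g U) (hinj : InjOn g U) :
    ContinuousOn (fun p : ℂ × ℂ ↦ Fcocycle g p.1 p.2) (U ×ˢ U \ diagonal ℂ) := by
  have hg' : ContinuousOn (deriv g) U := (hg.deriv hU).continuousOn
  have hfst : MapsTo Prod.fst (U ×ˢ U \ diagonal ℂ) U := fun p hp ↦ hp.1.1
  have hsnd : MapsTo Prod.snd (U ×ˢ U \ diagonal ℂ) U := fun p hp ↦ hp.1.2
  refine .sub (.div ?_ ?_ ?_) (.div continuousOn_const ?_ ?_)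
  · exact (hg'.comp continuousOn_fst hfst).mul (hg'.comp continuousOn_snd hsnd)
  · exact ((hg.continuousOn.comp continuousOn_fst hfst).sub
      (hg.continuousOn.comp continuousOn_snd hsnd)).pow 2
  · exact fun p hp ↦ pow_ne_zero 2 (sub_ne_zero.mpr fun h ↦ hp.2 (hinj hp.1.1 hp.1.2 h))
  · exact (continuousOn_fst.sub continuousOn_snd).pow 2
  · exact fun p hp ↦ pow_ne_zero 2 (sub_ne_zero.mpr hp.2)

lemma exists_norm_Fcocycle_le (hU : IsOpen U) (hg : DifferentiableOn ℂ g U) (hinj : InjOn g U)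
    {c : ℂ} {r R : ℝ} (hrR : r < R) (hRU : closedBall c R ⊆ U) :
    ∃ C, ∀ z ∈ closedBall c r, ∀ w ∈ closedBall c r, z ≠ w → ‖Fcocycle g z w‖ ≤ C := by
  have hrR' : closedBall c r ⊆ closedBall c R := closedBall_subset_closedBall hrR.le
  have hsub : sphere c R ×ˢ closedBall c r ⊆ U ×ˢ U \ diagonal ℂ := by
    rintro ⟨ζ, w⟩ ⟨hζ, hw⟩
    refine ⟨⟨hRU (sphere_subset_closedBall hζ), hRU (hrR' hw)⟩, fun (h : ζ = w) ↦ ?_⟩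
    rw [mem_sphere, h] at hζ
    rw [mem_closedBall] at hw
    linarith
  obtain ⟨C, hC⟩ := ((isCompact_sphere c R).prod (isCompact_closedBall c r))
    |>.exists_bound_of_continuousOn ((continuousOn_Fcocycle hU hg hinj).mono hsub)
  refine ⟨C, fun z hz w hw hzw ↦ ?_⟩
  obtain ⟨G, hG, hGF⟩ := exists_differentiableOn_eqOn_Fcocycle hU hg hinj (hRU (hrR' hw))
  have hR : R ≠ 0 := (dist_nonneg.trans_lt ((mem_closedBall.mp hw).trans_lt hrR)).ne'
  rw [← show G z = Fcocycle g z w from hGF ⟨hRU (hrR' hz), hzw⟩]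
  refine Complex.norm_le_of_forall_mem_frontier_norm_le isBounded_ball (hG.diffContOnCl_ball hRU)
    (fun ζ hζ ↦ ?_) (closure_ball c hR ▸ hrR' hz)
  rw [frontier_ball c hR] at hζ
  rw [hGF ⟨hRU (sphere_subset_closedBall hζ), fun h ↦ (hsub (a := (ζ, w)) ⟨hζ, hw⟩).2 h⟩]
  exact hC (ζ, w) ⟨hζ, hw⟩

end InjectiveHolomorphic

lemma Fcocycle_congr_of_eqOn {f g : ℂ → ℂ} {V : Set ℂ} (hV : IsOpen V) (hfg : EqOn f g V)
    {z w : ℂ} (hz : z ∈ V) (hw : w ∈ V) : Fcocycle f z w = Fcocycle g z w := by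
  simp only [Fcocycle, hfg hz, hfg hw, hfg.deriv hV hz, hfg.deriv hV hw]

lemma MeasureTheory.Measure.prod_diagonal_eq_zero {α : Type*} [MeasurableSpace α]
    [MeasurableEq α] (μ ν : Measure α) [SFinite ν] [NullSingletonClass ν] :
    μ.prod ν (diagonal α) = 0 := by
  rw [Measure.measure_prod_null measurableSet_diagonal]
  refine Eventually.of_forall fun x ↦ ?_
  have : Prod.mk x ⁻¹' diagonal α = {x} := by ext y; simp [eq_comm]
  simp [this]

lemma integrableOn_sq_norm_Fcocycle {g : ℂ → ℂ} {V : Set ℂ} (hV : IsOpen V)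
    (hg : DifferentiableOn ℂ g V) (hinj : InjOn g V) {μ : Measure ℂ} [SFinite μ]
    [NullSingletonClass μ] (hμV : μ V ≠ ∞) {C : ℝ}
    (hC : ∀ z ∈ V, ∀ w ∈ V, z ≠ w → ‖Fcocycle g z w‖ ≤ C) :
    IntegrableOn (fun p : ℂ × ℂ ↦ ‖Fcocycle g p.1 p.2‖ ^ 2) (V ×ˢ V) (μ.prod μ) := by
  have hVV : MeasurableSet (V ×ˢ V) := (hV.prod hV).measurableSet
  have hdiag := Measure.prod_diagonal_eq_zero μ μ
  have hmeas := ((continuousOn_Fcocycle hV hg hinj).norm.pow 2).aestronglyMeasurable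
    (μ := μ.prod μ) (hVV.diff measurableSet_diagonal)
  rw [Measure.restrict_congr_set (sdiff_null_ae_eq_self hdiag)] at hmeas
  refine ⟨hmeas, .restrict_of_bounded (C ^ 2) ?_ ?_⟩
  · rw [Measure.prod_prod]; exact ENNReal.mul_lt_top hμV.lt_top hμV.lt_top
  filter_upwards [ae_restrict_mem hVV, ae_restrict_of_ae (measure_eq_zero_iff_ae_notMem.mp hdiag)]
    with p hp hpd
  rw [norm_pow, norm_norm]
  exact pow_le_pow_left₀ (norm_nonneg _) (hC _ hp.1 _ hp.2 hpd) 2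

instance : SFinite μB := by unfold μB; infer_instance

instance : NullSingletonClass μB := ⟨fun x ↦ by simp [μB]⟩

lemma unitDisk_eq_ball : unitDisk = ball 0 1 := by ext; simp [unitDisk]

theorem statement_12_general (f : ℂ → ℂ)
    (hfd : DifferentiableOn ℂ f unitDisk)
    (hfi : Set.InjOn f unitDisk)
    (U : Set ℂ) (hU : IsOpen U) (hUc : closure unitDisk ⊆ U)
    (ft : ℂ → ℂ)
    (hftd : DifferentiableOn ℂ ft U) (hfti : Set.InjOn ft U)
    (hfte : Set.EqOn ft f unitDisk) :
    IntegrableOn (fun p : ℂ × ℂ => ‖Fcocycle f p.1 p.2‖ ^ 2)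
      (unitDisk ×ˢ unitDisk) (μB.prod μB) := by
  rw [unitDisk_eq_ball, closure_ball _ one_ne_zero] at hUc
  obtain ⟨δ, hδ, hδU⟩ := (isCompact_closedBall (0 : ℂ) 1).exists_cthickening_subset_open hU hUc
  rw [cthickening_closedBall hδ.le zero_le_one] at hδU
  obtain ⟨C, hC⟩ := exists_norm_Fcocycle_le hU hftd hfti (lt_add_of_pos_left 1 hδ) hδU
  have hD : IsOpen unitDisk := unitDisk_eq_ball ▸ isOpen_ball
  refine integrableOn_sq_norm_Fcocycle hD hfd hfi (C := C) ?_ fun z hz w hw hzw ↦ ?_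
  · rw [μB, Measure.smul_apply, smul_eq_mul, unitDisk_eq_ball]
    exact ENNReal.mul_ne_top ENNReal.ofReal_ne_top measure_ball_lt_top.ne
  · have hsub : unitDisk ⊆ closedBall 0 1 := unitDisk_eq_ball ▸ ball_subset_closedBall
    rw [Fcocycle_congr_of_eqOn hD hfte.symm hz hw]
    exact hC z (hsub hz) w (hsub hw) hzw

/-- If an injective holomorphic map `f : 𝔻 → 𝔻` extends to an injective holomorphic
map on an open neighborhood of the closed disk, then `F_f` is square-integrable
on `𝔻 × 𝔻`. -/
theorem statement_12 (f : ℂ → ℂ)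
    (hfm : Set.MapsTo f unitDisk unitDisk)
    (hfd : DifferentiableOn ℂ f unitDisk)
    (hfi : Set.InjOn f unitDisk)
    (U : Set ℂ) (hU : IsOpen U) (hUc : closure unitDisk ⊆ U)
    (ft : ℂ → ℂ)
    (hftd : DifferentiableOn ℂ ft U) (hfti : Set.InjOn ft U)
    (hfte : Set.EqOn ft f unitDisk) :
    IntegrableOn (fun p : ℂ × ℂ => ‖Fcocycle f p.1 p.2‖ ^ 2)
      (unitDisk ×ˢ unitDisk) (μB.prod μB) :=
  statement_12_general f hfd hfi U hU hUc ft hftd hfti hfte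
end
end

section
/- Let φ : 𝔻 → 𝔻 be an injective holomorphic map and let f be in the Bergman space A²(𝔻). Then the function z ↦ φ'(z)·f(φ(z)) belongs to A²(𝔻) and ∫_𝔻 |φ'(z)·f(φ(z))|² dμ(z) ≤ ∫_𝔻 |f(z)|² dμ(z); that is, the composition operator T_φ f = φ'·(f∘φ) on A²(𝔻) has operator norm at most 1. -/
/-!
An injective holomorphic map `φ` is a real change of variables whose Jacobian determinant is
`|φ'|²`, so `∫_𝔻 |φ'|² |f ∘ φ|² = ∫_{φ(𝔻)} |f|² ≤ ∫_𝔻 |f|²`.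
-/

open MeasureTheory Complex Set

noncomputable section

lemma det_restrictScalars_toSpanSingleton (c : ℂ) :
    ((ContinuousLinearMap.toSpanSingleton ℂ c).restrictScalars ℝ).det = ‖c‖ ^ 2 := by
  simp [ContinuousLinearMap.det, LinearMap.det_restrictScalars, Algebra.norm_complex_eq,
    Complex.normSq_eq_norm_sq]

section ChangeOfVariables

variable {F : Type*} [NormedAddCommGroup F] [NormedSpace ℝ F]
  {μ : Measure ℂ} [μ.IsAddHaarMeasure] {s t : Set ℂ} {φ : ℂ → ℂ}

lemma hasFDerivWithinAt_restrictScalars_deriv (hs : IsOpen s)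
    (hφ : DifferentiableOn ℂ φ s) {x : ℂ} (hx : x ∈ s) :
    HasFDerivWithinAt φ
      ((ContinuousLinearMap.toSpanSingleton ℂ (deriv φ x)).restrictScalars ℝ) s x :=
  ((hφ.differentiableAt (hs.mem_nhds hx)).hasDerivAt.hasFDerivAt.restrictScalars ℝ)
    |>.hasFDerivWithinAt

theorem integrableOn_image_iff_integrableOn_norm_deriv_sq_smul (hs : IsOpen s)
    (hφ : DifferentiableOn ℂ φ s) (hφi : InjOn φ s) (g : ℂ → F) :
    IntegrableOn g (φ '' s) μ ↔ IntegrableOn (fun x => ‖deriv φ x‖ ^ 2 • g (φ x)) s μ := by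
  simpa only [det_restrictScalars_toSpanSingleton, abs_pow, abs_norm] using
    integrableOn_image_iff_integrableOn_abs_det_fderiv_smul μ hs.measurableSet
      (fun _ hx => hasFDerivWithinAt_restrictScalars_deriv hs hφ hx) hφi g

theorem integral_image_eq_integral_norm_deriv_sq_smul (hs : IsOpen s)
    (hφ : DifferentiableOn ℂ φ s) (hφi : InjOn φ s) (g : ℂ → F) :
    ∫ x in φ '' s, g x ∂μ = ∫ x in s, ‖deriv φ x‖ ^ 2 • g (φ x) ∂μ := by
  simpa only [det_restrictScalars_toSpanSingleton, abs_pow, abs_norm] using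
    integral_image_eq_integral_abs_det_fderiv_smul μ hs.measurableSet
      (fun _ hx => hasFDerivWithinAt_restrictScalars_deriv hs hφ hx) hφi g

lemma norm_deriv_sq_smul_norm_comp_sq (f : ℂ → ℂ) (x : ℂ) :
    ‖deriv φ x‖ ^ 2 • ‖f (φ x)‖ ^ 2 = ‖deriv φ x * f (φ x)‖ ^ 2 := by
  rw [smul_eq_mul, norm_mul, mul_pow]

theorem integrableOn_norm_deriv_mul_comp_sq (hs : IsOpen s) (hφm : MapsTo φ s t)
    (hφ : DifferentiableOn ℂ φ s) (hφi : InjOn φ s) {f : ℂ → ℂ}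
    (hf : IntegrableOn (fun z => ‖f z‖ ^ 2) t μ) :
    IntegrableOn (fun z => ‖deriv φ z * f (φ z)‖ ^ 2) s μ := by
  simpa only [norm_deriv_sq_smul_norm_comp_sq] using
    (integrableOn_image_iff_integrableOn_norm_deriv_sq_smul hs hφ hφi _).mp
      (hf.mono_set hφm.image_subset)

theorem setIntegral_norm_deriv_mul_comp_sq_le (hs : IsOpen s) (hφm : MapsTo φ s t)
    (hφ : DifferentiableOn ℂ φ s) (hφi : InjOn φ s) {f : ℂ → ℂ}
    (hf : IntegrableOn (fun z => ‖f z‖ ^ 2) t μ) :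
    ∫ z in s, ‖deriv φ z * f (φ z)‖ ^ 2 ∂μ ≤ ∫ z in t, ‖f z‖ ^ 2 ∂μ := by
  calc ∫ z in s, ‖deriv φ z * f (φ z)‖ ^ 2 ∂μ
      = ∫ z in φ '' s, ‖f z‖ ^ 2 ∂μ := by
        simp only [integral_image_eq_integral_norm_deriv_sq_smul hs hφ hφi,
          norm_deriv_sq_smul_norm_comp_sq]
    _ ≤ ∫ z in t, ‖f z‖ ^ 2 ∂μ :=
        setIntegral_mono_set hf (.of_forall fun _ => by positivity)
          hφm.image_subset.eventuallyLE

end ChangeOfVariables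

lemma isOpen_unitDisk : IsOpen unitDisk :=
  isOpen_lt continuous_norm continuous_const

instance isAddHaarMeasure_μB : μB.IsAddHaarMeasure :=
  Measure.IsAddHaarMeasure.smul _ (by simp [Real.pi_pos]) ENNReal.ofReal_ne_top

/-- For an injective holomorphic map `φ : 𝔻 → 𝔻` and `f ∈ A²(𝔻)`, the function
`z ↦ φ'(z)·f(φ(z))` belongs to `A²(𝔻)` and its L² norm (squared) is at most that
of `f`; i.e. the operator `T_φ f = φ'·(f∘φ)` has norm at most `1`. -/
theorem statement_14 (φ : ℂ → ℂ)
    (hφm : Set.MapsTo φ unitDisk unitDisk)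
    (hφd : DifferentiableOn ℂ φ unitDisk)
    (hφi : Set.InjOn φ unitDisk)
    (f : ℂ → ℂ)
    (hf_hol : DifferentiableOn ℂ f unitDisk)
    (hf_sq : IntegrableOn (fun z => ‖f z‖ ^ 2) unitDisk μB) :
    DifferentiableOn ℂ (fun z => deriv φ z * f (φ z)) unitDisk ∧
    IntegrableOn (fun z => ‖deriv φ z * f (φ z)‖ ^ 2) unitDisk μB ∧
    ∫ z in unitDisk, ‖deriv φ z * f (φ z)‖ ^ 2 ∂μB
      ≤ ∫ z in unitDisk, ‖f z‖ ^ 2 ∂μB :=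
  ⟨(hφd.analyticOnNhd isOpen_unitDisk).deriv.differentiableOn.mul (hf_hol.comp hφd hφm),
    integrableOn_norm_deriv_mul_comp_sq isOpen_unitDisk hφm hφd hφi hf_sq,
    setIntegral_norm_deriv_mul_comp_sq_le isOpen_unitDisk hφm hφd hφi hf_sq⟩
end
end
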